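/- arXiv:0908.3414 — 2 statements merged into one kernel-verified Lean document; each statement's English description precedes it below -/
import Mathlib

section
/- Fix r > 0, λ ∈ ℝ, a, b ∈ ℂ, m ∈ ℕ, and complex constants c_k, d_k for k ∈ {−m, …, m}. Define Ψ : ℝ² → ℂ² by Ψ(θ, t) = i·λ·t·(b, a)ᵀ + Σ_{k=−m}^{m} e^{ikθ/r}·(d_k·e^{−kt/r}, c_k·e^{kt/r})ᵀ. Then Ψ satisfies σ₁·(∂Ψ/∂θ) − σ₂·(∂Ψ/∂t) = λ·(a, b)ᵀ at every point (θ, t) ∈ ℝ². -/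
open Complex Matrix

/-- Clifford multiplication `σ₁ = [[0,1],[-1,0]]`. -/
def sigma1 : Matrix (Fin 2) (Fin 2) ℂ := !![0, 1; -1, 0]

/-- Clifford multiplication `σ₂ = [[0,i],[i,0]]`. -/
def sigma2 : Matrix (Fin 2) (Fin 2) ℂ := !![0, I; I, 0]

/-- Partial derivative in the first (θ-)variable of a complex-valued function on `ℝ²`. -/
noncomputable def pdθ (h : ℝ × ℝ → ℂ) (p : ℝ × ℝ) : ℂ :=
  deriv (fun s => h (s, p.2)) p.1

/-- Partial derivative in the second (t-)variable of a complex-valued function on `ℝ²`. -/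
noncomputable def pdt (h : ℝ × ℝ → ℂ) (p : ℝ × ℝ) : ℂ :=
  deriv (fun s => h (p.1, s)) p.2

/-!
The components of `Ψ` are `f(θ,t) = iλb·t + Φ_d(θ + it)` and `g(θ,t) = iλa·t + Φ_c(θ − it)`,
with `Φ_c(z) = Σ c_k e^{ikz/r}` entire. A function of `θ + ζt` with `Φ` complex differentiable has
`∂_t = ζ ∂_θ`, so the holomorphic parts are killed by `−∂_θ − i∂_t` and `∂_θ − i∂_t` respectively,
and only the linear terms contribute, giving `−i·iλb = λb` and `−i·iλa = λa`.
-/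

lemma sigma1_mulVec (x y : ℂ) : sigma1 *ᵥ ![x, y] = ![y, -x] := by
  ext i; fin_cases i <;> simp [sigma1]

lemma sigma2_mulVec (x y : ℂ) : sigma2 *ᵥ ![x, y] = ![I * y, I * x] := by
  ext i; fin_cases i <;> simp [sigma2, mul_comm]

section LinearAddComp

variable (u ζ : ℂ) (Φ : ℂ → ℂ) (p : ℝ × ℝ)

lemma pdθ_linear_add_comp (hΦ : DifferentiableAt ℂ Φ (p.1 + ζ * p.2)) :
    pdθ (fun q => u * q.2 + Φ (q.1 + ζ * q.2)) p = deriv Φ (p.1 + ζ * p.2) := by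
  have h : HasDerivAt (fun w : ℂ => u * p.2 + Φ (w + ζ * p.2)) (deriv Φ (p.1 + ζ * p.2)) p.1 :=
    (hΦ.hasDerivAt.comp_add_const _ _).const_add _
  exact h.comp_ofReal.deriv

lemma pdt_linear_add_comp (hΦ : DifferentiableAt ℂ Φ (p.1 + ζ * p.2)) :
    pdt (fun q => u * q.2 + Φ (q.1 + ζ * q.2)) p = u + ζ * deriv Φ (p.1 + ζ * p.2) := by
  have hlin : HasDerivAt (fun w : ℂ => p.1 + ζ * w) ζ p.2 := by
    simpa using (hasDerivAt_id (p.2 : ℂ)).const_mul ζ |>.const_add (p.1 : ℂ)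
  have h : HasDerivAt (fun w : ℂ => u * w + Φ (p.1 + ζ * w))
      (u + ζ * deriv Φ (p.1 + ζ * p.2)) p.2 := by
    refine (((hasDerivAt_id _).const_mul u).add (hΦ.hasDerivAt.comp (p.2 : ℂ) hlin)).congr_deriv ?_
    simp [mul_comm]
  exact h.comp_ofReal.deriv

end LinearAddComp

noncomputable def trigPoly (r : ℝ) (m : ℕ) (c : ℤ → ℂ) (z : ℂ) : ℂ :=
  ∑ k ∈ Finset.Icc (-(m : ℤ)) (m : ℤ), c k * Complex.exp (I * k * z / r)

lemma differentiable_trigPoly (r : ℝ) (m : ℕ) (c : ℤ → ℂ) : Differentiable ℂ (trigPoly r m c) := by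
  unfold trigPoly; fun_prop

theorem stmt_5_general (r : ℝ) (lam : ℝ) (a b : ℂ) (m : ℕ) (c d : ℤ → ℂ)
    (f g : ℝ × ℝ → ℂ)
    (hfdef : f = fun p => I * (lam : ℂ) * (p.2 : ℂ) * b
      + ∑ k ∈ Finset.Icc (-(m : ℤ)) (m : ℤ),
        Complex.exp (I * (k : ℂ) * (p.1 : ℂ) / (r : ℂ)) *
          (d k * Complex.exp (-(k : ℂ) * (p.2 : ℂ) / (r : ℂ))))
    (hgdef : g = fun p => I * (lam : ℂ) * (p.2 : ℂ) * a
      + ∑ k ∈ Finset.Icc (-(m : ℤ)) (m : ℤ),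
        Complex.exp (I * (k : ℂ) * (p.1 : ℂ) / (r : ℂ)) *
          (c k * Complex.exp ((k : ℂ) * (p.2 : ℂ) / (r : ℂ)))) :
    ∀ p : ℝ × ℝ,
      sigma1.mulVec ![pdθ f p, pdθ g p] - sigma2.mulVec ![pdt f p, pdt g p]
        = (lam : ℂ) • ![a, b] := by
  intro p
  have hf : f = fun q => I * lam * b * q.2 + trigPoly r m d (q.1 + I * q.2) := by
    subst hfdef; funext q; unfold trigPoly; congr 1
    · ring
    refine Finset.sum_congr rfl fun k _ => ?_
    rw [mul_left_comm, ← Complex.exp_add]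
    congr 2; linear_combination (-k * q.2 / r : ℂ) * I_sq
  have hg : g = fun q => I * lam * a * q.2 + trigPoly r m c (q.1 + -I * q.2) := by
    subst hgdef; funext q; unfold trigPoly; congr 1
    · ring
    refine Finset.sum_congr rfl fun k _ => ?_
    rw [mul_left_comm, ← Complex.exp_add]
    congr 2; linear_combination (k * q.2 / r : ℂ) * I_sq
  rw [hf, hg, sigma1_mulVec, sigma2_mulVec,
    pdθ_linear_add_comp _ _ _ _ (differentiable_trigPoly r m c _),
    pdθ_linear_add_comp _ _ _ _ (differentiable_trigPoly r m d _),
    pdt_linear_add_comp _ _ _ _ (differentiable_trigPoly r m c _),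
    pdt_linear_add_comp _ _ _ _ (differentiable_trigPoly r m d _)]
  simp only [cons_sub_cons, smul_cons, smul_eq_mul, empty_sub_empty, smul_empty]
  congr 2
  · linear_combination (deriv (trigPoly r m c) (p.1 + -I * p.2) - lam * a) * I_sq
  · linear_combination (-deriv (trigPoly r m d) (p.1 + I * p.2) - lam * b) * I_sq

/-- The explicit spinor `Ψ(θ,t) = iλt(b,a)ᵀ + Σ_{k=-m}^m e^{ikθ/r}(d_k e^{-kt/r}, c_k e^{kt/r})ᵀ`
of Theorem 3 satisfies equation (55): `σ₁·∂Ψ/∂θ − σ₂·∂Ψ/∂t = λ·(a,b)ᵀ` everywhere, where the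
partial derivatives of `Ψ = (f,g)` are taken componentwise. -/
theorem stmt_5 (r : ℝ) (hr : 0 < r) (lam : ℝ) (a b : ℂ) (m : ℕ) (c d : ℤ → ℂ)
    (f g : ℝ × ℝ → ℂ)
    (hfdef : f = fun p => I * (lam : ℂ) * (p.2 : ℂ) * b
      + ∑ k ∈ Finset.Icc (-(m : ℤ)) (m : ℤ),
        Complex.exp (I * (k : ℂ) * (p.1 : ℂ) / (r : ℂ)) *
          (d k * Complex.exp (-(k : ℂ) * (p.2 : ℂ) / (r : ℂ))))
    (hgdef : g = fun p => I * (lam : ℂ) * (p.2 : ℂ) * a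
      + ∑ k ∈ Finset.Icc (-(m : ℤ)) (m : ℤ),
        Complex.exp (I * (k : ℂ) * (p.1 : ℂ) / (r : ℂ)) *
          (c k * Complex.exp ((k : ℂ) * (p.2 : ℂ) / (r : ℂ)))) :
    ∀ p : ℝ × ℝ,
      sigma1.mulVec ![pdθ f p, pdθ g p] - sigma2.mulVec ![pdt f p, pdt g p]
        = (lam : ℂ) • ![a, b] :=
  stmt_5_general r lam a b m c d f g hfdef hgdef
end

section
/- Fix r, R > 0, m ∈ ℕ, a, b ∈ ℂ, and complex constants c_k, d_k for k ∈ {−m, …, m} satisfying Re(a·conj(d₀) + conj(b)·c₀) = √(R²+r²)(R²+2r²)/(2rR) and a·conj(d_k) + conj(b)·c_{−k} = 0 for every k ∈ {±1, …, ±m}. Let χ = (a, b)ᵀ and define Ψ : ℝ² → ℂ² by Ψ(θ, t) = i·(√(R²+r²)/(rR))·t·(b, a)ᵀ + Σ_{k=−m}^{m} e^{ikθ/r}·(d_k·e^{−kt/r}, c_k·e^{kt/r})ᵀ. Then Re⟨χ, Ψ(θ, t)⟩ = √(R²+r²)(R²+2r²)/(2rR) for every (θ, t) ∈ ℝ². 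-/
open Complex ComplexConjugate

/-!
Writing `f = iλt·b + Σ d_k e^{ikθ/r} e^{-kt/r}` and `g = iλt·a + Σ c_k e^{ikθ/r} e^{kt/r}`,
the linear terms contribute `-iλt·2 Re(a b̄)` to `a f̄ + b ḡ`, which is purely imaginary.
In the Fourier part, the conjugate of the phase `e^{ikθ/r} e^{-kt/r}` is the phase
`e^{i(-k)θ/r} e^{(-k)t/r}` of `g` at `-k`, so after reindexing `k ↦ -k` the `k`-th mode carries
the coefficient `a d̄_k + b̄ c_{-k}`. Condition (6) kills every mode but `k = 0`, and
condition (5) is the real part of the remaining one.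
-/

lemma re_mul_conj_add_mul_conj_of_re_eq_zero (a b u v x : ℂ) (hx : x.re = 0) :
    (a * conj (x * b + u) + b * conj (x * a + v)).re = (a * conj u + conj b * v).re := by
  simp only [map_add, map_mul, add_re, add_im, mul_re, mul_im, conj_re, conj_im, hx]
  ring

lemma Finset.sum_comp_neg_of_neg_mem {M : Type*} [AddCommMonoid M] (S : Finset ℤ)
    (hS : ∀ k ∈ S, -k ∈ S) (F : ℤ → M) : ∑ k ∈ S, F (-k) = ∑ k ∈ S, F k :=
  Finset.sum_nbij' Neg.neg Neg.neg hS hS (fun k _ => neg_neg k) (fun k _ => neg_neg k)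
    (fun _ _ => rfl)

lemma mul_conj_sum_add_conj_mul_sum (S : Finset ℤ) (hS : ∀ k ∈ S, -k ∈ S) (a b : ℂ)
    (c d e p q : ℤ → ℂ) (hconj : ∀ k, conj (e k * p k) = e (-k) * q (-k)) :
    a * conj (∑ k ∈ S, e k * (d k * p k)) + conj b * ∑ k ∈ S, e k * (c k * q k)
      = ∑ k ∈ S, conj (e k * p k) * (a * conj (d k) + conj b * c (-k)) := by
  rw [← S.sum_comp_neg_of_neg_mem hS (fun k => e k * (c k * q k)), map_sum, Finset.mul_sum,
    Finset.mul_sum, ← Finset.sum_add_distrib]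
  refine Finset.sum_congr rfl fun k _ => ?_
  rw [show e k * (d k * p k) = d k * (e k * p k) by ring, map_mul, hconj]
  ring

theorem stmt_8_general (r R : ℝ) (m : ℕ) (a b : ℂ) (c d : ℤ → ℂ)
    (h5 : (a * (starRingEnd ℂ) (d 0) + (starRingEnd ℂ) b * c 0).re
      = Real.sqrt (R ^ 2 + r ^ 2) * (R ^ 2 + 2 * r ^ 2) / (2 * r * R))
    (h6 : ∀ k : ℤ, k ≠ 0 → |k| ≤ (m : ℤ) →
      a * (starRingEnd ℂ) (d k) + (starRingEnd ℂ) b * c (-k) = 0)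
    (f g : ℝ × ℝ → ℂ)
    (hfdef : f = fun p => I * ((Real.sqrt (R ^ 2 + r ^ 2) / (r * R) : ℝ) : ℂ) * (p.2 : ℂ) * b
      + ∑ k ∈ Finset.Icc (-(m : ℤ)) (m : ℤ),
        Complex.exp (I * (k : ℂ) * (p.1 : ℂ) / (r : ℂ)) *
          (d k * Complex.exp (-(k : ℂ) * (p.2 : ℂ) / (r : ℂ))))
    (hgdef : g = fun p => I * ((Real.sqrt (R ^ 2 + r ^ 2) / (r * R) : ℝ) : ℂ) * (p.2 : ℂ) * a
      + ∑ k ∈ Finset.Icc (-(m : ℤ)) (m : ℤ),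
        Complex.exp (I * (k : ℂ) * (p.1 : ℂ) / (r : ℂ)) *
          (c k * Complex.exp ((k : ℂ) * (p.2 : ℂ) / (r : ℂ)))) :
    ∀ p : ℝ × ℝ,
      (a * (starRingEnd ℂ) (f p) + b * (starRingEnd ℂ) (g p)).re
        = Real.sqrt (R ^ 2 + r ^ 2) * (R ^ 2 + 2 * r ^ 2) / (2 * r * R) := by
  rintro ⟨θ, t⟩
  subst hfdef hgdef
  have hS : ∀ k ∈ Finset.Icc (-(m : ℤ)) m, -k ∈ Finset.Icc (-(m : ℤ)) m := by
    intro k hk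
    rw [Finset.mem_Icc] at hk ⊢
    omega
  have hconj : ∀ k : ℤ,
      conj (exp (I * k * θ / r) * exp (-k * t / r))
        = exp (I * ↑(-k) * θ / r) * exp (↑(-k) * t / r) := by
    intro k
    simp only [map_mul, ← exp_conj, map_div₀, map_neg, conj_I, map_intCast, conj_ofReal]
    push_cast
    ring_nf
  rw [re_mul_conj_add_mul_conj_of_re_eq_zero _ _ _ _ _
    (by simp only [mul_re, I_re, I_im, ofReal_re, ofReal_im]; ring),
    mul_conj_sum_add_conj_mul_sum _ hS a b c d _ _ _ hconj,
    Finset.sum_eq_single_of_mem 0 (by simp)]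
  · simpa using h5
  · intro k hk hk0
    rw [h6 k hk0 (abs_le.mpr (Finset.mem_Icc.mp hk)), mul_zero]

/-- Verification of condition (ii) of Theorem 7.1 for Theorem 3: under conditions (5) and (6)
on the constants `c_k, d_k`, the real part of `⟨χ, Ψ⟩ = a·conj f + b·conj g` is the constant
`√(R²+r²)(R²+2r²)/(2rR)`, where `Ψ = (f,g)` is the explicit spinor with
`λ = √(R²+r²)/(rR)`. -/
theorem stmt_8 (r R : ℝ) (hr : 0 < r) (hR : 0 < R) (m : ℕ) (a b : ℂ) (c d : ℤ → ℂ)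
    (h5 : (a * (starRingEnd ℂ) (d 0) + (starRingEnd ℂ) b * c 0).re
      = Real.sqrt (R ^ 2 + r ^ 2) * (R ^ 2 + 2 * r ^ 2) / (2 * r * R))
    (h6 : ∀ k : ℤ, k ≠ 0 → |k| ≤ (m : ℤ) →
      a * (starRingEnd ℂ) (d k) + (starRingEnd ℂ) b * c (-k) = 0)
    (f g : ℝ × ℝ → ℂ)
    (hfdef : f = fun p => I * ((Real.sqrt (R ^ 2 + r ^ 2) / (r * R) : ℝ) : ℂ) * (p.2 : ℂ) * b
      + ∑ k ∈ Finset.Icc (-(m : ℤ)) (m : ℤ),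
        Complex.exp (I * (k : ℂ) * (p.1 : ℂ) / (r : ℂ)) *
          (d k * Complex.exp (-(k : ℂ) * (p.2 : ℂ) / (r : ℂ))))
    (hgdef : g = fun p => I * ((Real.sqrt (R ^ 2 + r ^ 2) / (r * R) : ℝ) : ℂ) * (p.2 : ℂ) * a
      + ∑ k ∈ Finset.Icc (-(m : ℤ)) (m : ℤ),
        Complex.exp (I * (k : ℂ) * (p.1 : ℂ) / (r : ℂ)) *
          (c k * Complex.exp ((k : ℂ) * (p.2 : ℂ) / (r : ℂ)))) :
    ∀ p : ℝ × ℝ,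
      (a * (starRingEnd ℂ) (f p) + b * (starRingEnd ℂ) (g p)).re
        = Real.sqrt (R ^ 2 + r ^ 2) * (R ^ 2 + 2 * r ^ 2) / (2 * r * R) :=
  stmt_8_general r R m a b c d h5 h6 f g hfdef hgdef
end
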